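/- Let Σ consist of unary symbols f and C and constants a and b, and let R be the TRS with rules a → f(a), b → f(b), C(b) → C(C(a)). Let C^ω denote the unique term with C^ω = C(C^ω). Then C(a) =∞ C^ω holds, but ¬(C(a) ((∞→)⁻¹ ∪ ∞→)* C^ω). Hence the inclusion ((∞→)⁻¹ ∪ ∞→)* ⊆ =∞ is strict for this TRS. -/

import Mathlib

open Relation

/-- A signature: a type of function symbols together with an arity for each symbol. -/
structure Signature where
  Sym : Type
  ar : Sym → ℕ

/-- The polynomial functor whose final coalgebra is the set of (finite and infinite)
terms over the signature `Sg` and the set `X` of variables. -/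
def TermF (Sg : Signature) (X : Type) : PFunctor.{0} :=
  ⟨X ⊕ Sg.Sym, fun a => Sum.rec (fun _ => Empty) (fun f => Fin (Sg.ar f)) a⟩

/-- The set `T` of finite and infinite terms over `Sg` and `X`, defined coinductively
(as the final coalgebra, i.e. the M-type, of `TermF Sg X`). -/
def Tm (Sg : Signature) (X : Type) : Type := PFunctor.M (TermF Sg X)

variable {Sg : Signature} {X : Type}

/-- The term consisting of a single variable. -/
def Tm.var (x : X) : Tm Sg X := PFunctor.M.mk ⟨Sum.inl x, Empty.elim⟩

/-- The term `f(t₁,…,tₙ)` with root symbol `f` and arguments `args`. -/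
def Tm.node (f : Sg.Sym) (args : Fin (Sg.ar f) → Tm Sg X) : Tm Sg X :=
  PFunctor.M.mk ⟨Sum.inr f, args⟩

/-- One step of the corecursive definition of substitution:
`Sum.inl t` means `t` still has to be substituted, `Sum.inr t` means `t` is copied. -/
def substAux (σ : X → Tm Sg X) :
    (Tm Sg X ⊕ Tm Sg X) → (TermF Sg X) (Tm Sg X ⊕ Tm Sg X) := fun s =>
  match s with
  | Sum.inl t =>
    match PFunctor.M.dest t with
    | ⟨Sum.inl x, _⟩ =>
        ⟨(PFunctor.M.dest (σ x)).1, fun b => Sum.inr ((PFunctor.M.dest (σ x)).2 b)⟩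
    | ⟨Sum.inr f, k⟩ => ⟨Sum.inr f, fun b => Sum.inl (k b)⟩
  | Sum.inr t =>
      ⟨(PFunctor.M.dest t).1, fun b => Sum.inr ((PFunctor.M.dest t).2 b)⟩

/-- Application `tσ` of a substitution `σ : X → T` to a term `t`, defined corecursively. -/
def subst (σ : X → Tm Sg X) (t : Tm Sg X) : Tm Sg X :=
  PFunctor.M.corec (substAux σ) (Sum.inl t)

/-- `Occurs x t`: the variable `x` occurs in the term `t`. -/
inductive Occurs (x : X) : Tm Sg X → Prop
  | here {t : Tm Sg X} : t = Tm.var x → Occurs x t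
  | deeper {t : Tm Sg X} {f : Sg.Sym} {args : Fin (Sg.ar f) → Tm Sg X}
      (i : Fin (Sg.ar f)) : t = Tm.node f args → Occurs x (args i) → Occurs x t

/-- A term rewriting system over `Sg` and `X`: a set of rules `ℓ → r` such that
`ℓ` is not a variable and all variables of `r` occur in `ℓ`. -/
structure TRS (Sg : Signature) (X : Type) where
  rules : Set (Tm Sg X × Tm Sg X)
  lhs_not_var : ∀ l r, (l, r) ∈ rules → ∀ x : X, l ≠ Tm.var x
  vars_lhs : ∀ l r, (l, r) ∈ rules → ∀ x : X, Occurs x r → Occurs x l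

/-- Relations on terms. -/
abbrev TRel (Sg : Signature) (X : Type) := Tm Sg X → Tm Sg X → Prop

/-- The root step relation `→ε := {(ℓσ, rσ) | ℓ → r ∈ R, σ a substitution}`. -/
def RootStep (R : TRS Sg X) : TRel Sg X := fun s t =>
  ∃ l r, (l, r) ∈ R.rules ∧ ∃ σ : X → Tm Sg X, s = subst σ l ∧ t = subst σ r

/-- `StepAt Q p s t`: a `Q`-step at position `p`, i.e. `s = C[u]`, `t = C[v]` with
`(u,v) ∈ Q` and `C` a one-hole context whose hole is at position `p`. -/
inductive StepAt (Q : TRel Sg X) : List ℕ → Tm Sg X → Tm Sg X → Prop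
  | here {s t : Tm Sg X} : Q s t → StepAt Q [] s t
  | deeper {f : Sg.Sym} {ss ts : Fin (Sg.ar f) → Tm Sg X} (i : Fin (Sg.ar f))
      {p : List ℕ} : StepAt Q p (ss i) (ts i) → (∀ j, j ≠ i → ss j = ts j) →
      StepAt Q ((i : ℕ) :: p) (Tm.node f ss) (Tm.node f ts)

/-- The one-step rewrite relation `→` of a TRS: a root step applied inside a
one-hole context. -/
def Step (R : TRS Sg X) : TRel Sg X := fun s t => ∃ p, StepAt (RootStep R) p s t

/-- The lifting `↓R` of a relation `R`:
`↓R := {(f(s₁,…,sₙ), f(t₁,…,tₙ)) | f ∈ Σ, s₁ R t₁, …, sₙ R tₙ} ∪ Id`. -/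
def liftRel (R : TRel Sg X) : TRel Sg X := fun s t =>
  s = t ∨ ∃ (f : Sg.Sym) (ss ts : Fin (Sg.ar f) → Tm Sg X),
    s = Tm.node f ss ∧ t = Tm.node f ts ∧ ∀ i, R (ss i) (ts i)

lemma liftRel_mono : Monotone (liftRel (Sg := Sg) (X := X)) := by
  intro R S h s t hst
  rcases hst with h1 | ⟨f, ss, ts, rfl, rfl, hi⟩
  · exact Or.inl h1
  · exact Or.inr ⟨f, ss, ts, rfl, rfl, fun i => h _ _ (hi i)⟩

/-- Relational composition `r ∘ s`. -/
def relComp (r s : TRel Sg X) : TRel Sg X := fun a c => ∃ b, r a b ∧ s b c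

/-- The monotone operator `S ↦ (→ε ∪ ↓R)* ∘ ↓S` (for a fixed `R`). -/
def iredInnerHom (R : TRS Sg X) (U : TRel Sg X) : TRel Sg X →o TRel Sg X where
  toFun S := relComp
    (ReflTransGen (fun s t => RootStep R s t ∨ liftRel U s t)) (liftRel S)
  monotone' := by
    intro S S' h a c hac
    rcases hac with ⟨b, h1, h2⟩
    exact ⟨b, h1, liftRel_mono h _ _ h2⟩

/-- The monotone operator `R ↦ νS.((→ε ∪ ↓R)* ∘ ↓S)`. -/
def iredHom (R : TRS Sg X) : TRel Sg X →o TRel Sg X where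
  toFun U := OrderHom.gfp (iredInnerHom R U)
  monotone' := by
    intro U V h
    apply OrderHom.gfp.monotone
    intro S a c hac
    rcases hac with ⟨b, h1, h2⟩
    refine ⟨b, ?_, h2⟩
    clear h2
    induction h1 with
    | refl => exact ReflTransGen.refl
    | tail _ hxy ih =>
      exact ReflTransGen.tail ih (hxy.imp id (fun h' => liftRel_mono h _ _ h'))

/-- The infinitary rewrite relation `→∞ := μR.νS.((→ε ∪ ↓R)* ∘ ↓S)`. -/
def ired (R : TRS Sg X) : TRel Sg X := OrderHom.lfp (iredHom R)

/-- The monotone operator `R' ↦ (→ε ∪ ↓R')*`. -/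
def biHom (R : TRS Sg X) : TRel Sg X →o TRel Sg X where
  toFun U := ReflTransGen (fun s t => RootStep R s t ∨ liftRel U s t)
  monotone' := by
    intro U V h a b hab
    induction hab with
    | refl => exact ReflTransGen.refl
    | tail _ hxy ih =>
      exact ReflTransGen.tail ih (hxy.imp id (fun h' => liftRel_mono h _ _ h'))

/-- The bi-infinite rewrite relation `∞→ := νR.(→ε ∪ ↓R)*`. -/
def bired (R : TRS Sg X) : TRel Sg X := OrderHom.gfp (biHom R)

/-- The monotone operator `R' ↦ (←ε ∪ →ε ∪ ↓R')*`. -/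
def ieqHom (R : TRS Sg X) : TRel Sg X →o TRel Sg X where
  toFun U := ReflTransGen (fun s t => RootStep R t s ∨ RootStep R s t ∨ liftRel U s t)
  monotone' := by
    intro U V h a b hab
    induction hab with
    | refl => exact ReflTransGen.refl
    | tail _ hxy ih =>
      exact ReflTransGen.tail ih
        (hxy.imp id (fun h' => h'.imp id (fun h'' => liftRel_mono h _ _ h'')))

/-- The infinitary equational reasoning relation `=∞ := νR.(←ε ∪ →ε ∪ ↓R)*`. -/
def ieq (R : TRS Sg X) : TRel Sg X := OrderHom.gfp (ieqHom R)

/-- `Agree n s t`: the terms `s` and `t` coincide up to depth `n`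
(i.e. `d(s,t) ≤ 2^{-n}` for the standard metric `d`). -/
def Agree : ℕ → Tm Sg X → Tm Sg X → Prop
  | 0, _, _ => True
  | n + 1, s, t =>
      (∃ x : X, s = Tm.var x ∧ t = Tm.var x) ∨
      ∃ (f : Sg.Sym) (ss ts : Fin (Sg.ar f) → Tm Sg X),
        s = Tm.node f ss ∧ t = Tm.node f ts ∧ ∀ i, Agree n (ss i) (ts i)

/-- `ConvTo t p l tl`: as `β` approaches the ordinal `l` from below,
`d(t β, tl)` tends to `0` and the depth `|p β|` tends to infinity. -/
def ConvTo (t : Ordinal.{0} → Tm Sg X) (p : Ordinal.{0} → List ℕ) (l : Ordinal.{0})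
    (tl : Tm Sg X) : Prop :=
  (∀ n : ℕ, ∃ β₀ < l, ∀ β, β₀ ≤ β → β < l → Agree n (t β) tl) ∧
  (∀ n : ℕ, ∃ β₀ < l, ∀ β, β₀ ≤ β → β < l → n ≤ (p β).length)

/-- Limit ordinals (the old Mathlib `Ordinal.IsLimit`, removed since). -/
def Ordinal.IsLimit (o : Ordinal) : Prop := Order.IsSuccLimit o

/-- A transfinite sequence of `Q`-steps `(t_β →_{p_β} t_{β+1})_{β<α}` of ordinal
length `α`, weakly continuous and with depths tending to infinity at every limit
ordinal `λ < α`. -/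
structure TransSeq (Q : TRel Sg X) (α : Ordinal.{0}) where
  t : Ordinal.{0} → Tm Sg X
  pos : Ordinal.{0} → List ℕ
  step : ∀ β < α, StepAt Q (pos β) (t β) (t (β + 1))
  conv : ∀ l < α, Ordinal.IsLimit l → ConvTo t pos l (t l)

/-- A transfinite rewrite sequence is strongly convergent if its length is a successor
ordinal (or zero), or there exists a final term to which it converges (with depths
tending to infinity) at the limit. -/
def TransSeq.StronglyConvergent {Q : TRel Sg X} {α : Ordinal.{0}} (s : TransSeq Q α) : Prop :=
  α.IsLimit → ∃ tl, ConvTo s.t s.pos α tl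

/-- `SCRed Q s t`: there is a strongly convergent transfinite sequence of `Q`-steps
from `s` to `t`. -/
def SCRed (Q : TRel Sg X) : TRel Sg X := fun a b =>
  ∃ (α : Ordinal.{0}) (s : TransSeq Q α), s.t 0 = a ∧ s.t α = b ∧
    (α.IsLimit → ConvTo s.t s.pos α b)

/-- The standard, ordinal-based infinitary rewrite relation `→∞_ord`:
strongly convergent transfinite rewrite sequences. -/
def iredOrd (R : TRS Sg X) : TRel Sg X := SCRed (RootStep R)

-- auxiliary facts about the term constructors
lemma node_ne_var (f : Sg.Sym) (args : Fin (Sg.ar f) → Tm Sg X) (x : X) :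
    Tm.node f args ≠ Tm.var x := by
  intro h
  have h1 := congrArg (fun u => (PFunctor.M.dest u).1) h
  simp only [Tm.node, Tm.var, PFunctor.M.dest_mk] at h1
  exact Sum.inr_ne_inl h1

lemma node_inj_sym {f g : Sg.Sym} {ss : Fin (Sg.ar f) → Tm Sg X}
    {ts : Fin (Sg.ar g) → Tm Sg X} (h : Tm.node f ss = Tm.node g ts) : f = g := by
  have h1 := congrArg (fun u => (PFunctor.M.dest u).1) h
  simp only [Tm.node, PFunctor.M.dest_mk] at h1
  exact Sum.inr.inj h1

lemma node_inj_args {f : Sg.Sym} {ss ts : Fin (Sg.ar f) → Tm Sg X}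
    (h : Tm.node f ss = Tm.node f ts) : ss = ts := by
  have h' : (PFunctor.M.mk ⟨Sum.inr f, ss⟩ : Tm Sg X) = PFunctor.M.mk ⟨Sum.inr f, ts⟩ := h
  have h1 := PFunctor.M.mk_inj h'
  injection h1 with h2 h3

lemma var_inj {x y : X} (h : (Tm.var x : Tm Sg X) = Tm.var y) : x = y := by
  have h1 := congrArg (fun u => (PFunctor.M.dest u).1) h
  simp only [Tm.var, PFunctor.M.dest_mk] at h1
  exact Sum.inl.inj h1

lemma occurs_var_iff {x y : X} : Occurs x (Tm.var y : Tm Sg X) ↔ x = y := by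
  constructor
  · intro h
    cases h with
    | here h => exact (var_inj h.symm)
    | deeper i h _ => exact absurd h.symm (node_ne_var _ _ _)
  · rintro rfl
    exact Occurs.here rfl

lemma occurs_node_iff {x : X} {f : Sg.Sym} {args : Fin (Sg.ar f) → Tm Sg X} :
    Occurs x (Tm.node f args) ↔ ∃ i, Occurs x (args i) := by
  constructor
  · intro h
    cases h with
    | here h => exact absurd h (node_ne_var _ _ _)
    | deeper i h hocc =>
      obtain rfl := node_inj_sym h
      obtain rfl := node_inj_args h
      exact ⟨i, hocc⟩
  · rintro ⟨i, h⟩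
    exact Occurs.deeper i rfl h

/-! ### The TRS with rules `a → f(a)`, `b → f(b)`, `C(b) → C(C(a))` -/

inductive SymFC : Type
  | f : SymFC
  | C : SymFC
  | a : SymFC
  | b : SymFC

/-- The signature with unary symbols `f` and `C` and constants `a` and `b`. -/
def SgFC : Signature := ⟨SymFC, fun s => match s with | .f => 1 | .C => 1 | .a => 0 | .b => 0⟩

def tmA3 : Tm SgFC ℕ := Tm.node SymFC.a Fin.elim0
def tmB3 : Tm SgFC ℕ := Tm.node SymFC.b Fin.elim0
def tmF3 (u : Tm SgFC ℕ) : Tm SgFC ℕ := Tm.node SymFC.f (fun _ => u)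
def tmC3 (u : Tm SgFC ℕ) : Tm SgFC ℕ := Tm.node SymFC.C (fun _ => u)

/-- The TRS with the rules `a → f(a)`, `b → f(b)`, `C(b) → C(C(a))`. -/
def RFC : TRS SgFC ℕ where
  rules := {(tmA3, tmF3 tmA3), (tmB3, tmF3 tmB3), (tmC3 tmB3, tmC3 (tmC3 tmA3))}
  lhs_not_var := by
    rintro l r hm x
    simp only [Set.mem_insert_iff, Set.mem_singleton_iff, Prod.mk.injEq] at hm
    rcases hm with ⟨rfl, rfl⟩ | ⟨rfl, rfl⟩ | ⟨rfl, rfl⟩ <;> exact node_ne_var _ _ _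
  vars_lhs := by
    rintro l r hm x h
    simp only [Set.mem_insert_iff, Set.mem_singleton_iff, Prod.mk.injEq] at hm
    rcases hm with ⟨rfl, rfl⟩ | ⟨rfl, rfl⟩ | ⟨rfl, rfl⟩
    · rcases occurs_node_iff.mp h with ⟨i, h⟩
      exact h
    · rcases occurs_node_iff.mp h with ⟨i, h⟩
      exact h
    · rcases occurs_node_iff.mp h with ⟨i, h⟩
      rcases occurs_node_iff.mp h with ⟨j, h⟩
      rcases occurs_node_iff.mp h with ⟨k, h⟩
      exact k.elim0


/-!
For `=∞`, the pair `(a, b)` is self-justifying: `a →ε f(a) ↓ f(b) ←ε b`, the middle step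
using `a =∞ b` again. With it, `C(a) ↓ C(b) →ε C(C(a)) ↓ C(Cω) = Cω`, coinductively in
`C(a) =∞ Cω`.

For `∞→`, the only rule that fires at the root of a `C`-rooted term is `C(b) → C(C(a))`,
and it is never available along a bi-infinite reduction from or to `Cω`: `C`-rooted terms
only reduce to `C`-rooted ones, so `Cω` never reaches `b`; and `a`- or `f`-rooted terms stay
`a`- or `f`-rooted, so `C(a)` never reaches `Cω`. Hence every reduct of `Cω`, and every term
reducing to `Cω`, has the form `C(w)` with `w` again such a term, which by coinduction forces
it to be `Cω` itself. So `Cω` is alone in its class of `((∞→)⁻¹ ∪ ∞→)*`, and `C(a) ≠ Cω`.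
-/

namespace Tm

def head (t : Tm Sg X) : X ⊕ Sg.Sym := PFunctor.M.head t

@[simp]
lemma head_node (f : Sg.Sym) (args : Fin (Sg.ar f) → Tm Sg X) :
    (Tm.node f args).head = Sum.inr f :=
  PFunctor.M.head_mk _

theorem eq_of_le_liftRel {Q : TRel Sg X} (hQ : Q ≤ liftRel Q) {s t : Tm Sg X} (h : Q s t) :
    s = t := by
  refine PFunctor.M.bisim (fun x y => x = y ∨ Q x y) ?_ s t (Or.inr h)
  have diag : ∀ x : Tm Sg X, ∃ a f f', PFunctor.M.dest x = ⟨a, f⟩ ∧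
      PFunctor.M.dest x = ⟨a, f'⟩ ∧ ∀ i, f i = f' i ∨ Q (f i) (f' i) :=
    fun x => ⟨_, _, _, rfl, rfl, fun _ => Or.inl rfl⟩
  rintro x y (rfl | hxy)
  · exact diag x
  · rcases hQ x y hxy with rfl | ⟨f, ss, ts, rfl, rfl, hi⟩
    · exact diag x
    · exact ⟨Sum.inr f, ss, ts, PFunctor.M.dest_mk _, PFunctor.M.dest_mk _,
        fun i => Or.inr (hi i)⟩

end Tm

lemma subst_node (σ : X → Tm Sg X) (f : Sg.Sym) (args : Fin (Sg.ar f) → Tm Sg X) :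
    subst σ (Tm.node f args) = Tm.node f (fun i => subst σ (args i)) := by
  have hdest : PFunctor.M.dest (subst σ (Tm.node f args)) =
      ⟨Sum.inr f, fun i => subst σ (args i)⟩ := by
    rw [subst, PFunctor.M.dest_corec]
    simp only [substAux, Tm.node]
    rfl
  rw [← PFunctor.M.mk_dest (subst σ _), hdest]
  rfl

lemma liftRel_head_eq {Q : TRel Sg X} {s t : Tm Sg X} (h : liftRel Q s t) : s.head = t.head := by
  rcases h with rfl | ⟨f, ss, ts, rfl, rfl, -⟩ <;> simp

lemma liftRel_flip {Q : TRel Sg X} {s t : Tm Sg X} (h : liftRel Q s t) : liftRel (flip Q) t s := by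
  rcases h with rfl | ⟨f, ss, ts, rfl, rfl, hi⟩
  · exact Or.inl rfl
  · exact Or.inr ⟨f, ts, ss, rfl, rfl, hi⟩

theorem Relation.ReflTransGen.eq_of_forall_eq {α : Type*} {r : α → α → Prop} {a b : α}
    (hb : ∀ x, r x b → x = b) (h : ReflTransGen r a b) : a = b := by
  induction h using Relation.ReflTransGen.head_induction_on with
  | refl => rfl
  | head hac _ ih => exact hb _ (ih ▸ hac)

section Bired

variable {R : TRS Sg X}

theorem bired_eq_reflTransGen :
    bired R = ReflTransGen (fun s t => RootStep R s t ∨ liftRel (bired R) s t) :=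
  (biHom R).map_gfp.symm

lemma bired_refl (s : Tm Sg X) : bired R s s := by
  rw [bired_eq_reflTransGen]

lemma bired_trans {s t u : Tm Sg X} (hst : bired R s t) (htu : bired R t u) : bired R s u := by
  rw [bired_eq_reflTransGen] at *
  exact hst.trans htu

theorem bired_invariant {P : Tm Sg X → Prop} (hroot : ∀ s t, RootStep R s t → P s → P t)
    (hlift : ∀ s t, liftRel (bired R) s t → P s → P t) {s t : Tm Sg X} (h : bired R s t)
    (hs : P s) : P t := by
  rw [bired_eq_reflTransGen] at h
  induction h with
  | refl => exact hs
  | tail _ hstep ih => exact hstep.elim (hroot _ _ · ih) (hlift _ _ · ih)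

theorem bired_invariant_rev {P : Tm Sg X → Prop} (hroot : ∀ s t, RootStep R s t → P t → P s)
    (hlift : ∀ s t, liftRel (bired R) s t → P t → P s) {s t : Tm Sg X} (h : bired R s t)
    (ht : P t) : P s := by
  rw [bired_eq_reflTransGen] at h
  induction h using Relation.ReflTransGen.head_induction_on with
  | refl => exact ht
  | head hstep _ ih => exact hstep.elim (hroot _ _ · ih) (hlift _ _ · ih)

theorem bired_head_invariant {p : X ⊕ Sg.Sym → Prop}
    (hp : ∀ s t, RootStep R s t → p s.head → p t.head) {s t : Tm Sg X} (h : bired R s t)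
    (hs : p s.head) : p t.head :=
  bired_invariant hp (fun _ _ hst => (liftRel_head_eq hst) ▸ id) h hs

end Bired

@[simp] lemma head_tmA3 : tmA3.head = Sum.inr SymFC.a := Tm.head_node _ _
@[simp] lemma head_tmB3 : tmB3.head = Sum.inr SymFC.b := Tm.head_node _ _
@[simp] lemma head_tmF3 (u : Tm SgFC ℕ) : (tmF3 u).head = Sum.inr SymFC.f := Tm.head_node _ _
@[simp] lemma head_tmC3 (u : Tm SgFC ℕ) : (tmC3 u).head = Sum.inr SymFC.C := Tm.head_node _ _

lemma tmC3_injective : Function.Injective tmC3 :=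
  fun _ _ h => congrFun (node_inj_args h) (0 : Fin 1)

lemma node_C_eq_tmC3 (ts : Fin (SgFC.ar SymFC.C) → Tm SgFC ℕ) :
    Tm.node SymFC.C ts = tmC3 (ts (0 : Fin 1)) :=
  congrArg _ (funext fun i => congrArg ts (Subsingleton.elim (α := Fin 1) i _))

@[simp] lemma subst_tmA3 (σ : ℕ → Tm SgFC ℕ) : subst σ tmA3 = tmA3 :=
  (subst_node _ _ _).trans (congrArg _ (funext fun i => i.elim0))

@[simp] lemma subst_tmB3 (σ : ℕ → Tm SgFC ℕ) : subst σ tmB3 = tmB3 :=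
  (subst_node _ _ _).trans (congrArg _ (funext fun i => i.elim0))

@[simp] lemma subst_tmF3 (σ : ℕ → Tm SgFC ℕ) (u : Tm SgFC ℕ) :
    subst σ (tmF3 u) = tmF3 (subst σ u) :=
  subst_node _ _ _

@[simp] lemma subst_tmC3 (σ : ℕ → Tm SgFC ℕ) (u : Tm SgFC ℕ) :
    subst σ (tmC3 u) = tmC3 (subst σ u) :=
  subst_node _ _ _

theorem rootStep_RFC_iff {s t : Tm SgFC ℕ} :
    RootStep RFC s t ↔ (s = tmA3 ∧ t = tmF3 tmA3) ∨ (s = tmB3 ∧ t = tmF3 tmB3) ∨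
      (s = tmC3 tmB3 ∧ t = tmC3 (tmC3 tmA3)) := by
  constructor
  · rintro ⟨l, r, hm, σ, rfl, rfl⟩
    simp only [RFC, Set.mem_insert_iff, Set.mem_singleton_iff, Prod.mk.injEq] at hm
    rcases hm with ⟨rfl, rfl⟩ | ⟨rfl, rfl⟩ | ⟨rfl, rfl⟩ <;> simp
  · rintro (⟨rfl, rfl⟩ | ⟨rfl, rfl⟩ | ⟨rfl, rfl⟩)
    · exact ⟨tmA3, tmF3 tmA3, by simp [RFC], fun _ => tmA3, by simp, by simp⟩
    · exact ⟨tmB3, tmF3 tmB3, by simp [RFC], fun _ => tmA3, by simp, by simp⟩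
    · exact ⟨tmC3 tmB3, tmC3 (tmC3 tmA3), by simp [RFC], fun _ => tmA3, by simp, by simp⟩

lemma liftRel_tmC3_left {Q : TRel SgFC ℕ} (hQ : ∀ x, Q x x) {w v : Tm SgFC ℕ}
    (h : liftRel Q (tmC3 w) v) : ∃ w', v = tmC3 w' ∧ Q w w' := by
  rcases h with rfl | ⟨g, ss, ts, hw, rfl, hi⟩
  · exact ⟨w, rfl, hQ w⟩
  · obtain rfl : SymFC.C = g := node_inj_sym hw
    obtain rfl := node_inj_args hw
    exact ⟨_, node_C_eq_tmC3 ts, hi _⟩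

lemma liftRel_tmC3_right {Q : TRel SgFC ℕ} (hQ : ∀ x, Q x x) {w v : Tm SgFC ℕ}
    (h : liftRel Q v (tmC3 w)) : ∃ w', v = tmC3 w' ∧ Q w' w :=
  liftRel_tmC3_left (Q := flip Q) hQ (liftRel_flip h)

lemma bired_head_af {s t : Tm SgFC ℕ} (h : bired RFC s t)
    (hs : s.head = Sum.inr SymFC.a ∨ s.head = Sum.inr SymFC.f) :
    t.head = Sum.inr SymFC.a ∨ t.head = Sum.inr SymFC.f := by
  refine bired_head_invariant (p := fun h => h = Sum.inr SymFC.a ∨ h = Sum.inr SymFC.f)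
    (fun s t hst => ?_) h hs
  rcases rootStep_RFC_iff.mp hst with ⟨rfl, rfl⟩ | ⟨rfl, rfl⟩ | ⟨rfl, rfl⟩ <;>
    grind [head_tmA3, head_tmB3, head_tmF3, head_tmC3]

lemma bired_head_C {s t : Tm SgFC ℕ} (h : bired RFC s t) (hs : s.head = Sum.inr SymFC.C) :
    t.head = Sum.inr SymFC.C := by
  refine bired_head_invariant (p := (· = Sum.inr SymFC.C)) (fun s t hst => ?_) h hs
  rcases rootStep_RFC_iff.mp hst with ⟨rfl, rfl⟩ | ⟨rfl, rfl⟩ | ⟨rfl, rfl⟩ <;>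
    grind [head_tmA3, head_tmB3, head_tmF3, head_tmC3]

section FixedPoint

variable {Cω : Tm SgFC ℕ}

/-- The argument of `C(a)` stays `a`- or `f`-rooted, while the only rule applicable at the
root of a `C`-term needs the argument `b`. -/
lemma not_bired_tmC3_tmA3 (hCω : Cω = tmC3 Cω) : ¬ bired RFC (tmC3 tmA3) Cω := by
  let P : Tm SgFC ℕ → Prop := fun t =>
    ∃ w, t = tmC3 w ∧ (w.head = Sum.inr SymFC.a ∨ w.head = Sum.inr SymFC.f)
  have hroot : ∀ s t, RootStep RFC s t → P s → P t := by
    rintro s t hst ⟨w, rfl, hw⟩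
    rcases rootStep_RFC_iff.mp hst with ⟨h, -⟩ | ⟨h, -⟩ | ⟨h, -⟩
    · nomatch node_inj_sym h
    · nomatch node_inj_sym h
    · grind [tmC3_injective h, head_tmB3]
  have hlift : ∀ s t, liftRel (bired RFC) s t → P s → P t := by
    rintro s t hst ⟨w, rfl, hw⟩
    obtain ⟨w', rfl, hww'⟩ := liftRel_tmC3_left bired_refl hst
    exact ⟨w', rfl, bired_head_af hww' hw⟩
  intro h
  obtain ⟨w, hw, hwh⟩ := bired_invariant hroot hlift h ⟨tmA3, rfl, .inl head_tmA3⟩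
  rw [tmC3_injective (hw.symm.trans hCω), hCω, head_tmC3] at hwh
  grind

lemma exists_tmC3_of_bired_from (hCω : Cω = tmC3 Cω) {v : Tm SgFC ℕ} (h : bired RFC Cω v) :
    ∃ w, v = tmC3 w ∧ bired RFC Cω w := by
  refine bired_invariant (P := fun v => ∃ w, v = tmC3 w ∧ bired RFC Cω w)
    (fun s t hst => ?_) (fun s t hst => ?_) h ⟨Cω, hCω, bired_refl Cω⟩
  · rintro ⟨w, rfl, hw⟩
    rcases rootStep_RFC_iff.mp hst with ⟨h, -⟩ | ⟨h, -⟩ | ⟨h, -⟩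
    · nomatch node_inj_sym h
    · nomatch node_inj_sym h
    · have := bired_head_C hw (by rw [hCω, head_tmC3])
      rw [tmC3_injective h, head_tmB3] at this
      nomatch this
  · rintro ⟨w, rfl, hw⟩
    obtain ⟨w', rfl, hww'⟩ := liftRel_tmC3_left bired_refl hst
    exact ⟨w', rfl, bired_trans hw hww'⟩

lemma exists_tmC3_of_bired_to (hCω : Cω = tmC3 Cω) {v : Tm SgFC ℕ} (h : bired RFC v Cω) :
    ∃ w, v = tmC3 w ∧ bired RFC w Cω := by
  refine bired_invariant_rev (P := fun v => ∃ w, v = tmC3 w ∧ bired RFC w Cω)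
    (fun s t hst => ?_) (fun s t hst => ?_) h ⟨Cω, hCω, bired_refl Cω⟩
  · rintro ⟨w, rfl, hw⟩
    rcases rootStep_RFC_iff.mp hst with ⟨-, h⟩ | ⟨-, h⟩ | ⟨-, h⟩
    · nomatch node_inj_sym h
    · nomatch node_inj_sym h
    · exact (not_bired_tmC3_tmA3 hCω (tmC3_injective h ▸ hw)).elim
  · rintro ⟨w, rfl, hw⟩
    obtain ⟨w', rfl, hw'w⟩ := liftRel_tmC3_right bired_refl hst
    exact ⟨w', rfl, bired_trans hw'w hw⟩

lemma eq_of_forall_exists_tmC3 (hCω : Cω = tmC3 Cω) {P : Tm SgFC ℕ → Prop}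
    (hP : ∀ t, P t → ∃ w, t = tmC3 w ∧ P w) {t : Tm SgFC ℕ} (ht : P t) : t = Cω := by
  refine Tm.eq_of_le_liftRel (Q := fun x y => P x ∧ y = Cω) ?_ ⟨ht, rfl⟩
  rintro x y ⟨hx, hy⟩
  obtain ⟨w, rfl, hw⟩ := hP x hx
  exact Or.inr ⟨SymFC.C, _, _, rfl, hy.trans hCω, fun _ => ⟨hw, rfl⟩⟩

lemma ieq_tmC3_tmA3 (hCω : Cω = tmC3 Cω) : ieq RFC (tmC3 tmA3) Cω := by
  let U : TRel SgFC ℕ := fun s t => (s = tmC3 tmA3 ∧ t = Cω) ∨ (s = tmA3 ∧ t = tmB3)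
  suffices hU : U ≤ ieqHom RFC U from (ieqHom RFC).le_gfp hU _ _ (Or.inl ⟨rfl, rfl⟩)
  have liftC : ∀ u v, U u v → liftRel U (tmC3 u) (tmC3 v) :=
    fun u v huv => Or.inr ⟨SymFC.C, _, _, rfl, rfl, fun _ => huv⟩
  have hC : RootStep RFC (tmC3 tmB3) (tmC3 (tmC3 tmA3)) := rootStep_RFC_iff.mpr (by simp)
  have ha : RootStep RFC tmA3 (tmF3 tmA3) := rootStep_RFC_iff.mpr (by simp)
  have hb : RootStep RFC tmB3 (tmF3 tmB3) := rootStep_RFC_iff.mpr (by simp)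
  rintro s t (⟨rfl, rfl⟩ | ⟨rfl, rfl⟩)
  · -- `C(a) ↓U C(b) →ε C(C(a)) ↓U C(Cω) = Cω`
    refine .head (.inr (.inr (liftC _ _ (.inr ⟨rfl, rfl⟩))))
      (.head (.inr (.inl hC)) (.single ?_))
    exact .inr (.inr (hCω ▸ liftC _ _ (.inl ⟨rfl, rfl⟩)))
  · -- `a →ε f(a) ↓U f(b) ←ε b`
    refine .head (.inr (.inl ha)) (.head (.inr (.inr ?_)) (.single (.inl hb)))
    exact Or.inr ⟨SymFC.f, _, _, rfl, rfl, fun _ => .inr ⟨rfl, rfl⟩⟩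

end FixedPoint

/-- For the TRS `{a → f(a), b → f(b), C(b) → C(C(a))}` and the unique
term `C^ω` with `C^ω = C(C^ω)`: `C(a) =∞ C^ω` holds, but not
`C(a) ((∞→)⁻¹ ∪ ∞→)* C^ω`; hence the inclusion `((∞→)⁻¹ ∪ ∞→)* ⊆ =∞` is strict
for this TRS. -/
theorem ieq_strict_example (Cω : Tm SgFC ℕ) (hCω : Cω = tmC3 Cω) :
    ieq RFC (tmC3 tmA3) Cω ∧
    ¬ Relation.ReflTransGen (fun s t => bired RFC t s ∨ bired RFC s t) (tmC3 tmA3) Cω := by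
  refine ⟨ieq_tmC3_tmA3 hCω, fun h => ?_⟩
  have hclosed : ∀ v, (bired RFC Cω v ∨ bired RFC v Cω) → v = Cω := by
    rintro v (hv | hv)
    · exact eq_of_forall_exists_tmC3 hCω (fun _ => exists_tmC3_of_bired_from hCω) hv
    · exact eq_of_forall_exists_tmC3 hCω (fun _ => exists_tmC3_of_bired_to hCω) hv
  have hCa : tmA3 = tmC3 Cω :=
    (tmC3_injective ((h.eq_of_forall_eq hclosed).trans hCω)).trans hCω
  nomatch node_inj_sym hCa
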